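/- Let C be a (k,r,h) local maximally recoverable code over F_q with exactly two local groups (so k + h = 2r, r+1 ≤ k < 2r, and n = 2r + 2), and let r - h + 1 ≤ s ≤ 2r - h. Then the s-th higher support weight enumerator coefficients satisfy A^{(s)}_w = C(n,w) · Σ_{j=0}^{w-n+2r-h-s} C(w,j) (-1)^j [k-n+w-j choose s]_q for h+2+s ≤ w ≤ n, and A^{(s)}_w = 0 for w < h+2+s, where C(a,b) denotes the binomial coefficient. -/

import Mathlib

open Finset

/-- Coordinate index set of a `(k,r,h)` local code with `ℓ = (k+h)/r` local groups
(see stmt 4). -/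
abbrev LIdx (k h ℓ : ℕ) : Type := Fin (k + h) ⊕ Fin ℓ

/-- The support `S_i` of the `i`-th local group. -/
def lGroup (k h r ℓ : ℕ) (i : Fin ℓ) : Finset (LIdx k h ℓ) :=
  insert (Sum.inr i)
    ((Finset.univ.filter fun t : Fin (k + h) =>
      (i : ℕ) * r ≤ (t : ℕ) ∧ (t : ℕ) < ((i : ℕ) + 1) * r).image Sum.inl)

/-- The `j`-th coordinate of the `i`-th local group among the first `k + h` coordinates. -/
def lCoord (k h r ℓ : ℕ) (hkh : k + h = ℓ * r) (i : Fin ℓ) (j : Fin r) : Fin (k + h) :=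
  ⟨(i : ℕ) * r + (j : ℕ), by
    have hi : (i : ℕ) + 1 ≤ ℓ := i.2
    have hj : (j : ℕ) < r := j.2
    have h1 : ((i : ℕ) + 1) * r ≤ ℓ * r := Nat.mul_le_mul_right r hi
    have h2 : ((i : ℕ) + 1) * r = (i : ℕ) * r + r := by ring
    omega⟩

/-- The Gaussian binomial coefficient `[t choose s]_q`, taken to be `0` when `t < s`. -/
def gbinom (q t s : ℕ) : ℚ :=
  if s ≤ t then
    (∏ i ∈ Finset.range s, ((q : ℚ) ^ t - (q : ℚ) ^ i)) /
      (∏ i ∈ Finset.range s, ((q : ℚ) ^ s - (q : ℚ) ^ i))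
  else 0

/-!
Write `C(T)` for the subcode of codewords vanishing outside `T`. An `s`-dimensional subcode has
support inside `T` exactly when it lies in `C(T)`, so there are `[dim C(T) choose s]_q` of them,
and Möbius inversion on the Boolean lattice of supports turns these numbers into the `A_w^{(s)}`.

The MRC property determines `dim C(T)`. Puncturing one coordinate from each local group leaves
an MDS code of minimum distance `h + 1`, so by the Singleton bound `dim C(T) ≤ |T| - 2 - h` when
`T` meets both groups, and `dim C(T) ≤ r - h < s` when `T` lies inside one group (then also
`|T| - h - 2 < s`). Rank–nullity gives `dim C(T) ≥ k - (n - |T|) = |T| - h - 2`. Hence for every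
`T` the count is `[|T| - h - 2 choose s]_q`, which depends only on `|T|`.
-/

open Module Submodule

theorem gbinom_eq_zero_of_lt {q t s : ℕ} (h : t < s) : gbinom q t s = 0 :=
  if_neg (Nat.not_le.2 h)

instance {R M : Type*} [Semiring R] [AddCommMonoid M] [Module R M] [Finite M] :
    Finite (Submodule R M) :=
  Finite.of_injective _ SetLike.coe_injective

section SubspaceCount

variable {K V : Type*} [Field K] [AddCommGroup V] [Module K V] [Finite V]

def linearIndependentSpanEquiv {s : ℕ} (D : Submodule K V) (hD : finrank K D = s) :
    {f : {f : Fin s → V // LinearIndependent K f} // span K (Set.range f.1) = D} ≃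
      {g : Fin s → D // LinearIndependent K g} where
  toFun f := ⟨fun i => ⟨f.1.1 i, f.2.le (subset_span (Set.mem_range_self i))⟩,
    LinearIndependent.of_comp D.subtype f.1.2⟩
  invFun g := ⟨⟨D.subtype ∘ g.1, g.2.map' _ D.ker_subtype⟩, by
    rw [Set.range_comp, ← map_span, g.2.span_eq_top_of_card_eq_finrank' (by simp [hD]),
      map_subtype_top]⟩
  left_inv _ := rfl
  right_inv _ := rfl

variable [Fintype K]

theorem card_linearIndependent_eq_card_finrank_eq_mul {s : ℕ} :
    Nat.card {f : Fin s → V // LinearIndependent K f} =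
      Nat.card {D : Submodule K V // finrank K D = s} *
        ∏ i : Fin s, (Fintype.card K ^ s - Fintype.card K ^ (i : ℕ)) := by
  let spanOf (f : {f : Fin s → V // LinearIndependent K f}) :
      {D : Submodule K V // finrank K D = s} :=
    ⟨span K (Set.range f.1), by rw [finrank_span_eq_card f.2, Fintype.card_fin]⟩
  have : Fintype {D : Submodule K V // finrank K D = s} := Fintype.ofFinite _
  rw [← Nat.card_congr (Equiv.sigmaFiberEquiv spanOf), Nat.card_sigma, Nat.card_eq_fintype_card,
    ← smul_eq_mul, ← Finset.card_univ, ← sum_const]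
  refine sum_congr rfl fun D _ => ?_
  have e : {f // spanOf f = D} ≃ {f : {f : Fin s → V // LinearIndependent K f} //
      span K (Set.range f.1) = D.1} := Equiv.subtypeEquivRight fun f => Subtype.ext_iff
  rw [Nat.card_congr (e.trans (linearIndependentSpanEquiv D.1 D.2)),
    card_linearIndependent (by rw [D.2])]
  simp [D.2]

theorem card_finrank_eq_eq_gbinom (s : ℕ) :
    (Nat.card {D : Submodule K V // finrank K D = s} : ℚ) =
      gbinom (Fintype.card K) (finrank K V) s := by
  set q := Fintype.card K
  have hq : 1 < q := Fintype.one_lt_card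
  by_cases hs : s ≤ finrank K V
  · have hcast : ∀ m, s ≤ m → ((∏ i : Fin s, (q ^ m - q ^ (i : ℕ)) : ℕ) : ℚ) =
        ∏ i ∈ range s, ((q : ℚ) ^ m - (q : ℚ) ^ i) := fun m hm => by
      rw [Nat.cast_prod, Fin.prod_univ_eq_prod_range (fun i => ((q ^ m - q ^ i : ℕ) : ℚ))]
      refine prod_congr rfl fun i hi => ?_
      rw [Nat.cast_sub (Nat.pow_le_pow_right hq.le (mem_range.1 hi |>.le.trans hm))]
      push_cast; rfl
    have hden : ∏ i ∈ range s, ((q : ℚ) ^ s - (q : ℚ) ^ i) ≠ 0 :=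
      prod_ne_zero_iff.2 fun i hi => sub_ne_zero.2
        (pow_lt_pow_right₀ (by exact_mod_cast hq) (mem_range.1 hi)).ne'
    rw [gbinom, if_pos hs, eq_div_iff hden, ← hcast s le_rfl, ← hcast _ hs, ← Nat.cast_mul,
      ← card_linearIndependent hs, card_linearIndependent_eq_card_finrank_eq_mul]
  · have : IsEmpty {D : Submodule K V // finrank K D = s} :=
      ⟨fun D => hs (D.2 ▸ D.1.finrank_le)⟩
    rw [gbinom, if_neg hs, Nat.card_of_isEmpty, Nat.cast_zero]

theorem card_le_finrank_eq_eq_gbinom (W : Submodule K V) (s : ℕ) :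
    (Nat.card {D : Submodule K V // D ≤ W ∧ finrank K D = s} : ℚ) =
      gbinom (Fintype.card K) (finrank K W) s := by
  have e : {D : Submodule K W // finrank K D = s} ≃
      {D : Submodule K V // D ≤ W ∧ finrank K D = s} :=
    ((MapSubtype.orderIso W).toEquiv.subtypeEquiv fun D => by
      rw [← finrank_map_subtype_eq W D]; rfl).trans
      (Equiv.subtypeSubtypeEquivSubtypeInter _ _)
  rw [← Nat.card_congr e, card_finrank_eq_eq_gbinom]

end SubspaceCount

section SupportCounting

variable {α R : Type*} [DecidableEq α] [CommRing R]

theorem Finset.moebius_inversion_powerset (f g : Finset α → R)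
    (hg : ∀ U, g U = ∑ V ∈ U.powerset, f V) (T : Finset α) :
    f T = ∑ U ∈ T.powerset, (-1 : R) ^ #(T \ U) * g U := by
  simp only [hg]
  symm
  have hcomm : ∀ X V : Finset α, (X ⊆ T ∧ V ⊆ T \ X) ↔ (X ⊆ T \ V ∧ V ⊆ T) := fun X V => by
    simp only [subset_sdiff, disjoint_comm (a := V)]; tauto
  calc ∑ U ∈ T.powerset, (-1 : R) ^ #(T \ U) * ∑ V ∈ U.powerset, f V
      = ∑ X ∈ T.powerset, ∑ V ∈ (T \ X).powerset, (-1 : R) ^ #X * f V := by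
        refine sum_nbij' (T \ ·) (T \ ·) ?_ ?_ ?_ ?_ ?_ <;>
          simp_all [mul_sum]
    _ = ∑ V ∈ T.powerset, (∑ X ∈ (T \ V).powerset, (-1 : R) ^ #X) * f V := by
        rw [sum_comm' (t' := T.powerset) (s' := fun V => (T \ V).powerset)
          (by simpa only [mem_powerset] using hcomm)]
        simp only [sum_mul]
    _ = f T := by
        have hsum (V : Finset α) : ∑ X ∈ (T \ V).powerset, (-1 : R) ^ #X =
            if T \ V = ∅ then 1 else 0 := by
          exact_mod_cast congrArg (Int.cast : ℤ → R) sum_powerset_neg_one_pow_card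
        simp only [hsum, ite_mul, one_mul, zero_mul, sdiff_eq_empty_iff_subset]
        rw [sum_eq_single_of_mem T (mem_powerset_self T) fun U hU hne =>
          if_neg fun h => hne (subset_antisymm (mem_powerset.1 hU) h), if_pos subset_rfl]

theorem card_filter_card_eq_of_card_filter_subset {β : Type*} [Fintype α] (S : Finset β)
    (supp : β → Finset α) (g : ℕ → R) (hg : ∀ T, (#{b ∈ S | supp b ⊆ T} : R) = g #T) (w : ℕ) :
    (#{b ∈ S | #(supp b) = w} : R) = (Fintype.card α).choose w *
      ∑ j ∈ range (w + 1), (w.choose j : R) * (-1) ^ j * g (w - j) := by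
  have hfiber : ∀ T : Finset α, (#{b ∈ S | supp b ⊆ T} : R) =
      ∑ U ∈ T.powerset, (#{b ∈ S | supp b = U} : R) := fun T => by
    rw [card_eq_sum_card_fiberwise (f := supp) (t := T.powerset)
      fun b hb => mem_powerset.2 (mem_filter.1 hb).2, Nat.cast_sum]
    refine sum_congr rfl fun U hU => ?_
    rw [filter_filter]
    congr 2
    exact filter_congr fun b _ => and_iff_right_of_imp fun h => h ▸ mem_powerset.1 hU
  have hexact : ∀ T : Finset α, #T = w → (#{b ∈ S | supp b = T} : R) =
      ∑ j ∈ range (w + 1), (w.choose j : R) * (-1) ^ j * g (w - j) := fun T hT => by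
    calc (#{b ∈ S | supp b = T} : R)
        = ∑ U ∈ T.powerset, (-1 : R) ^ (w - #U) * g #U := by
          rw [moebius_inversion_powerset _ _ hfiber T]
          refine sum_congr rfl fun U hU => ?_
          rw [hg, card_sdiff_of_subset (mem_powerset.1 hU), hT]
      _ = ∑ m ∈ range (w + 1), (w.choose m : R) * ((-1) ^ (w - m) * g m) := by
          rw [sum_powerset_apply_card (fun m => (-1 : R) ^ (w - m) * g m), hT]
          simp only [nsmul_eq_mul]
      _ = ∑ j ∈ range (w + 1), (w.choose j : R) * (-1) ^ j * g (w - j) := by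
          rw [← sum_range_reflect]
          refine sum_congr rfl fun j hj => ?_
          have hjw : j ≤ w := Nat.lt_succ_iff.1 (mem_range.1 hj)
          rw [add_tsub_cancel_right, Nat.choose_symm hjw, Nat.sub_sub_self hjw, mul_assoc]
  rw [card_eq_sum_card_fiberwise (f := supp) (t := powersetCard w univ)
    fun b hb => mem_powersetCard.2 ⟨subset_univ _, (mem_filter.1 hb).2⟩, Nat.cast_sum,
    sum_congr rfl fun T hT => ?_, sum_const, card_powersetCard, card_univ, nsmul_eq_mul]
  rw [filter_filter, ← hexact T (mem_powersetCard.1 hT).2]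
  congr 2
  exact filter_congr fun b _ => and_iff_right_of_imp fun h => h ▸ (mem_powersetCard.1 hT).2

end SupportCounting

section LinearCode

variable {F ι : Type*} [Field F]

def supported (F : Type*) [Field F] (T : Finset ι) : Submodule F (ι → F) where
  carrier := {c | ∀ i ∉ T, c i = 0}
  add_mem' ha hb i hi := by simp [ha i hi, hb i hi]
  zero_mem' _ _ := rfl
  smul_mem' a _ hc i hi := by simp [hc i hi]

@[simp]
theorem mem_supported {T : Finset ι} {c : ι → F} : c ∈ supported F T ↔ ∀ i ∉ T, c i = 0 :=
  Iff.rfl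

theorem finrank_eq_of_forall_existsUnique {k : ℕ} {C : Submodule F (ι → F)} (p : Fin k → ι)
    (hsys : ∀ x : Fin k → F, ∃! c, c ∈ C ∧ ∀ j, c (p j) = x j) : finrank F C = k := by
  let π := (LinearMap.funLeft F F p).comp C.subtype
  have hbij : Function.Bijective π := by
    refine ⟨fun c₁ c₂ h => Subtype.ext <| (hsys (π c₁)).unique ⟨c₁.2, fun _ => rfl⟩
      ⟨c₂.2, fun j => (congrFun h j).symm⟩, fun x => ?_⟩
    obtain ⟨c, ⟨hc, hcx⟩, -⟩ := hsys x
    exact ⟨⟨c, hc⟩, funext hcx⟩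
  rw [(LinearEquiv.ofBijective π hbij).finrank_eq, finrank_fin_fun]

variable [Fintype ι]

noncomputable def coordSupport (D : Submodule F (ι → F)) : Finset ι :=
  (Set.toFinite {j | ∃ c ∈ D, c j ≠ 0}).toFinset

theorem card_coordSupport (D : Submodule F (ι → F)) :
    #(coordSupport D) = Set.ncard {j | ∃ c ∈ D, c j ≠ 0} :=
  (Set.ncard_eq_toFinset_card _ _).symm

theorem coordSupport_subset_iff {D : Submodule F (ι → F)} {T : Finset ι} :
    coordSupport D ⊆ T ↔ D ≤ supported F T := by
  simp only [coordSupport, Set.Finite.mem_toFinset, Set.mem_ofPred_eq,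
    SetLike.le_def, mem_supported]
  exact ⟨fun h c hc i hi => by_contra fun hne => hi (h ⟨c, hc, hne⟩),
    fun h i ⟨c, hc, hne⟩ => by_contra fun hi => hne (h hc i hi)⟩

theorem finrank_le_finrank_inf_supported_add_card_compl [DecidableEq ι]
    (C : Submodule F (ι → F)) (T : Finset ι) :
    finrank F C ≤ finrank F ↥(C ⊓ supported F T) + #Tᶜ := by
  set φ := (LinearMap.funLeft F F ((↑) : ↥Tᶜ → ι)).comp C.subtype
  have hker : LinearMap.ker φ = (C ⊓ supported F T).comap C.subtype := by
    ext c
    simp [φ, funext_iff]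
  have hrange : finrank F (LinearMap.range φ) ≤ #Tᶜ :=
    (Submodule.finrank_le _).trans (by simp)
  have := LinearMap.finrank_range_add_finrank_ker φ
  rw [hker, (Submodule.comapSubtypeEquivOfLe inf_le_left).finrank_eq] at this
  omega

-- The Singleton bound: deleting `d` coordinates of `M` is injective on `D`.
theorem finrank_le_card_sub_of_le_supported [DecidableEq F] [DecidableEq ι]
    {D : Submodule F (ι → F)} {M : Finset ι} {d : ℕ} (hD : D ≤ supported F M)
    (hw : ∀ y ∈ D, y ≠ 0 → d + 1 ≤ hammingNorm y) : finrank F D ≤ #M - d := by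
  obtain ⟨M₀, hM₀M, hM₀⟩ := exists_subset_card_eq (min_le_right d #M)
  let ψ := LinearMap.funLeft F F ((↑) : ↥(M \ M₀) → ι)
  have hinj : Function.Injective (ψ.domRestrict D) := by
    refine LinearMap.injective_domRestrict_iff.2 (Submodule.disjoint_def.2 fun y hyD hyψ => ?_)
    by_contra hy
    have hsupp : ∀ i, y i ≠ 0 → i ∈ M₀ := fun i hi => by
      by_contra hiM₀
      have hiM : i ∈ M := by_contra fun h => hi (hD hyD i h)
      exact hi (congrFun (LinearMap.mem_ker.1 hyψ) ⟨i, mem_sdiff.2 ⟨hiM, hiM₀⟩⟩)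
    have : hammingNorm y ≤ #M₀ := card_le_card fun i hi => hsupp i (mem_filter.1 hi).2
    have := hw y hyD hy
    omega
  have := LinearMap.finrank_le_finrank_of_injective hinj
  rw [finrank_fintype_fun_eq_card, Fintype.card_coe, card_sdiff_of_subset hM₀M, hM₀] at this
  omega

theorem finrank_inf_supported_le_of_puncture [DecidableEq F] [DecidableEq ι]
    {C : Submodule F (ι → F)} {E : Finset ι} {d : ℕ}
    (hdim : finrank F (C.map (LinearMap.funLeft F F ((↑) : ↥E → ι))) = finrank F C)
    (hw : ∀ y ∈ C.map (LinearMap.funLeft F F ((↑) : ↥E → ι)), y ≠ 0 → d + 1 ≤ hammingNorm y)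
    (T : Finset ι) : finrank F ↥(C ⊓ supported F T) ≤ #(T ∩ E) - d := by
  set ρ := LinearMap.funLeft F F ((↑) : ↥E → ι)
  set W := C ⊓ supported F T
  have hinj : Function.Injective (ρ.domRestrict W) :=
    LinearMap.injective_domRestrict_iff.2 <|
      (Submodule.disjoint_ker_of_finrank_le ρ hdim.ge).mono_left inf_le_left
  have hsupp : W.map ρ ≤ supported F (T.subtype (· ∈ E)) := by
    rintro _ ⟨c, hc, rfl⟩ e he
    exact hc.2 e (by simpa using he)
  have := finrank_le_card_sub_of_le_supported hsupp fun y hy =>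
    hw y (Submodule.map_mono inf_le_left hy)
  rwa [← LinearMap.range_domRestrict, LinearMap.finrank_range_of_inj hinj, card_subtype,
    filter_mem_eq_inter] at this

end LinearCode

section TwoLocalGroups

variable {k h r : ℕ}

@[simp]
theorem inl_mem_lGroup {ℓ : ℕ} {t : Fin (k + h)} {i : Fin ℓ} :
    Sum.inl t ∈ lGroup k h r ℓ i ↔ (i : ℕ) * r ≤ t ∧ (t : ℕ) < ((i : ℕ) + 1) * r := by
  simp [lGroup]

@[simp]
theorem inr_mem_lGroup {ℓ : ℕ} {i j : Fin ℓ} : Sum.inr j ∈ lGroup k h r ℓ i ↔ j = i := by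
  simp [lGroup]

theorem lGroup_one_eq_compl (hkh : k + h = 2 * r) :
    lGroup k h r 2 1 = (lGroup k h r 2 0)ᶜ := by
  ext (t | j)
  · have := t.2
    simp only [inl_mem_lGroup, mem_compl, Fin.val_zero, Fin.val_one]
    omega
  · fin_cases j <;> simp

theorem ne_of_mem_lGroup_zero_of_mem_lGroup_one (hkh : k + h = 2 * r) {x₀ x₁ : LIdx k h 2}
    (hx₀ : x₀ ∈ lGroup k h r 2 0) (hx₁ : x₁ ∈ lGroup k h r 2 1) : x₀ ≠ x₁ := by
  rintro rfl
  rw [lGroup_one_eq_compl hkh, mem_compl] at hx₁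
  exact hx₁ hx₀

theorem card_lGroup (hkh : k + h = 2 * r) (i : Fin 2) : #(lGroup k h r 2 i) = r + 1 := by
  have h0 : #(lGroup k h r 2 0) = r + 1 := by
    rw [lGroup, card_insert_of_notMem (by simp), card_image_of_injective _ Sum.inl_injective]
    simp only [Fin.val_zero, zero_mul, zero_le, true_and, zero_add, one_mul,
      Fin.card_filter_val_lt]
    omega
  fin_cases i
  · exact h0
  · rw [Fin.mk_one, lGroup_one_eq_compl hkh, card_compl, h0]
    simp only [Fintype.card_sum, Fintype.card_fin]
    omega

theorem card_compl_pair_of_mem_lGroup (hkh : k + h = 2 * r) {x₀ x₁ : LIdx k h 2}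
    (hx₀ : x₀ ∈ lGroup k h r 2 0) (hx₁ : x₁ ∈ lGroup k h r 2 1) :
    #({x₀, x₁}ᶜ : Finset (LIdx k h 2)) = k + h := by
  rw [card_compl, card_pair (ne_of_mem_lGroup_zero_of_mem_lGroup_one hkh hx₀ hx₁)]
  simp

theorem card_compl_pair_inter_lGroup (hkh : k + h = 2 * r) {x₀ x₁ : LIdx k h 2}
    (hx₀ : x₀ ∈ lGroup k h r 2 0) (hx₁ : x₁ ∈ lGroup k h r 2 1) (i : Fin 2) :
    #({x₀, x₁}ᶜ ∩ lGroup k h r 2 i) = r := by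
  have key : ∀ {S : Finset (LIdx k h 2)} {x y}, x ∈ S → y ∉ S → #S = r + 1 →
      #({x, y}ᶜ ∩ S) = r := fun hx hy hS => by
    rw [inter_comm, ← sdiff_eq_inter_compl, sdiff_insert, sdiff_singleton_eq_erase,
      erase_eq_of_notMem hy, card_erase_of_mem hx, hS, add_tsub_cancel_right]
  have hS₁ := lGroup_one_eq_compl hkh
  fin_cases i
  · exact key hx₀ (by simpa [hS₁] using hx₁) (card_lGroup hkh 0)
  · rw [pair_comm]
    exact key hx₁ (by simpa [hS₁] using hx₀) (card_lGroup hkh 1)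

end TwoLocalGroups

def IsMaximallyRecoverable (k h r ℓ : ℕ) {F : Type*} [Field F] [DecidableEq F]
    (C : Submodule F (LIdx k h ℓ → F)) : Prop :=
  ∀ E : Finset (LIdx k h ℓ), #E = k + h → (∀ i : Fin ℓ, #(E ∩ lGroup k h r ℓ i) = r) →
    finrank F (C.map (LinearMap.funLeft F F ((↑) : ↥E → LIdx k h ℓ))) = k ∧
    ∀ y ∈ C.map (LinearMap.funLeft F F ((↑) : ↥E → LIdx k h ℓ)), y ≠ 0 → h + 1 ≤ hammingNorm y

section TwoGroupMRC

variable {k h r : ℕ} {F : Type*} [Field F] [DecidableEq F] {C : Submodule F (LIdx k h 2 → F)}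

theorem finrank_inf_supported_le_of_mem_lGroup (hkh : k + h = 2 * r) (hrank : finrank F C = k)
    (hmrc : IsMaximallyRecoverable k h r 2 C) {x₀ x₁ : LIdx k h 2}
    (hx₀ : x₀ ∈ lGroup k h r 2 0) (hx₁ : x₁ ∈ lGroup k h r 2 1) (T : Finset (LIdx k h 2)) :
    finrank F ↥(C ⊓ supported F T) ≤ #(T ∩ {x₀, x₁}ᶜ) - h := by
  obtain ⟨hdim, hw⟩ := hmrc _ (card_compl_pair_of_mem_lGroup hkh hx₀ hx₁)
    (card_compl_pair_inter_lGroup hkh hx₀ hx₁)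
  exact finrank_inf_supported_le_of_puncture (hdim.trans hrank.symm) hw T

theorem gbinom_finrank_inf_supported (hkh : k + h = 2 * r) (hrank : finrank F C = k)
    (hmrc : IsMaximallyRecoverable k h r 2 C) {s : ℕ} (hs : r - h + 1 ≤ s) (q : ℕ)
    (T : Finset (LIdx k h 2)) :
    gbinom q (finrank F ↥(C ⊓ supported F T)) s = gbinom q (#T - (h + 2)) s := by
  have hS₁ := lGroup_one_eq_compl (r := r) hkh
  by_cases hT : (T ∩ lGroup k h r 2 0).Nonempty ∧ (T ∩ lGroup k h r 2 1).Nonempty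
  · obtain ⟨⟨x₀, hx₀⟩, ⟨x₁, hx₁⟩⟩ := hT
    rw [mem_inter] at hx₀ hx₁
    have hupper := finrank_inf_supported_le_of_mem_lGroup hkh hrank hmrc hx₀.2 hx₁.2 T
    rw [← sdiff_eq_inter_compl, card_sdiff_of_subset (insert_subset hx₀.1 (by simpa using hx₁.1)),
      card_pair (ne_of_mem_lGroup_zero_of_mem_lGroup_one hkh hx₀.2 hx₁.2)] at hupper
    have hlower := finrank_le_finrank_inf_supported_add_card_compl C T
    have hTcard : #T ≤ k + h + 2 := by simpa using card_le_univ T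
    rw [hrank, card_compl] at hlower
    simp only [Fintype.card_sum, Fintype.card_fin] at hlower
    rw [show finrank F ↥(C ⊓ supported F T) = #T - (h + 2) by omega]
  · obtain ⟨j, hj⟩ : ∃ j, T ⊆ lGroup k h r 2 j := by
      simp only [not_and_or, not_nonempty_iff_eq_empty, ← disjoint_iff_inter_eq_empty] at hT
      rcases hT with hT | hT
      · exact ⟨1, hS₁ ▸ subset_compl_iff_disjoint_right.2 hT⟩
      · exact ⟨0, compl_compl (lGroup k h r 2 0) ▸ hS₁ ▸ subset_compl_iff_disjoint_right.2 hT⟩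
    have hx₀ : (.inr 0 : LIdx k h 2) ∈ lGroup k h r 2 0 := by simp
    have hx₁ : (.inr 1 : LIdx k h 2) ∈ lGroup k h r 2 1 := by simp
    have hupper := finrank_inf_supported_le_of_mem_lGroup hkh hrank hmrc hx₀ hx₁ T
    have hTE : #(T ∩ {.inr 0, .inr 1}ᶜ) ≤ r :=
      card_compl_pair_inter_lGroup hkh hx₀ hx₁ j ▸
        card_le_card (inter_comm T _ ▸ inter_subset_inter_left hj)
    have hTcard := card_lGroup hkh j ▸ card_le_card hj
    rw [gbinom_eq_zero_of_lt (by omega), gbinom_eq_zero_of_lt (by omega)]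

end TwoGroupMRC

theorem card_subcodes_of_weight_eq {F ι : Type*} [Field F] [Fintype F] [Fintype ι]
    [DecidableEq ι] (C : Submodule F (ι → F)) (s : ℕ) (g : ℕ → ℚ)
    (hg : ∀ T : Finset ι, gbinom (Fintype.card F) (finrank F ↥(C ⊓ supported F T)) s = g #T)
    (w : ℕ) :
    (Nat.card {D : Submodule F (ι → F) // D ≤ C ∧ finrank F D = s ∧
        Set.ncard {j | ∃ c ∈ D, c j ≠ 0} = w} : ℚ) =
      (Fintype.card ι).choose w * ∑ j ∈ range (w + 1), (w.choose j : ℚ) * (-1) ^ j * g (w - j) := by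
  classical
  have := Fintype.ofFinite (Submodule F (ι → F))
  let S : Finset (Submodule F (ι → F)) := {D | D ≤ C ∧ finrank F D = s}
  have hS (T : Finset ι) : (#{D ∈ S | coordSupport D ⊆ T} : ℚ) = g #T := by
    rw [← hg, ← card_le_finrank_eq_eq_gbinom, Nat.card_eq_fintype_card, Fintype.card_subtype,
      filter_filter]
    simp only [coordSupport_subset_iff, le_inf_iff, and_right_comm]
  rw [Nat.card_eq_fintype_card, Fintype.card_subtype,
    ← card_filter_card_eq_of_card_filter_subset S coordSupport g hS w]
  simp [S, filter_filter, card_coordSupport, and_assoc]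

theorem stmt_18_general (k h r n q s : ℕ) (hkh : k + h = 2 * r)
    (hn : n = 2 * r + 2) (hs1 : r - h + 1 ≤ s)
    (F : Type) [Field F] [Fintype F] [DecidableEq F] (hq : q = Fintype.card F)
    (C : Submodule F (LIdx k h 2 → F))
    (hsys : ∀ x : Fin k → F, ∃! c : LIdx k h 2 → F,
      c ∈ C ∧ ∀ j : Fin k, c (Sum.inl (Fin.castLE (Nat.le_add_right k h) j)) = x j)
    (hmrc : ∀ E : Finset (LIdx k h 2), E.card = k + h →
      (∀ i : Fin 2, (E ∩ lGroup k h r 2 i).card = r) →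
      Module.finrank F
          (C.map (LinearMap.funLeft F F (Subtype.val : ↥E → LIdx k h 2))) = k ∧
      ∀ y ∈ C.map (LinearMap.funLeft F F (Subtype.val : ↥E → LIdx k h 2)),
        y ≠ 0 → h + 1 ≤ hammingNorm y)
    (As : ℕ → ℕ)
    (hAs : ∀ w, As w = Nat.card {D : Submodule F (LIdx k h 2 → F) //
      D ≤ C ∧ Module.finrank F D = s ∧
        Set.ncard {j : LIdx k h 2 | ∃ c ∈ D, c j ≠ 0} = w}) :
    (∀ w, h + 2 + s ≤ w → w ≤ n →
      (As w : ℚ) = (n.choose w : ℚ) *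
        ∑ j ∈ Finset.range (w + 2 * r - n - h - s + 1),
          (w.choose j : ℚ) * (-1 : ℚ) ^ j * gbinom q (k + w - n - j) s) ∧
    (∀ w, w < h + 2 + s → As w = 0) := by
  subst hq hn
  have hrank := finrank_eq_of_forall_existsUnique _ hsys
  have hA (w : ℕ) := card_subcodes_of_weight_eq C s
    (fun m => gbinom (Fintype.card F) (m - (h + 2)) s)
    (gbinom_finrank_inf_supported hkh hrank hmrc hs1 _) w
  simp only [Fintype.card_sum, Fintype.card_fin, hkh, ← hAs] at hA
  refine ⟨fun w hw _ => ?_, fun w hw => ?_⟩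
  · rw [hA w, ← sum_subset (range_subset_range.2
      (by omega : w + 2 * r - (2 * r + 2) - h - s + 1 ≤ w + 1)) fun j _ hj => by
      rw [mem_range, not_lt] at hj
      rw [gbinom_eq_zero_of_lt (by omega), mul_zero]]
    refine congrArg _ (sum_congr rfl fun j _ => ?_)
    rw [show k + w - (2 * r + 2) - j = w - j - (h + 2) by omega]
  · have hAw := hA w
    rw [sum_eq_zero fun j _ => by rw [gbinom_eq_zero_of_lt (by omega), mul_zero],
      mul_zero] at hAw
    exact_mod_cast hAw

/-- higher support weight enumerator coefficients (for `r-h+1 ≤ s ≤ 2r-h`) of a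
`(k,r,h)` local MRC over `F_q` with two local groups
(`k + h = 2r`, `r + 1 ≤ k < 2r`, `n = 2r + 2`):
`A^{(s)}_w = C(n,w) ∑_{j=0}^{w-n+2r-h-s} C(w,j) (-1)^j [k-n+w-j choose s]_q` for
`h+2+s ≤ w ≤ n`, and `A^{(s)}_w = 0` for `w < h+2+s`. -/
theorem stmt_18 (k h r n q s : ℕ) (hkh : k + h = 2 * r) (hk1 : r + 1 ≤ k) (hk2 : k < 2 * r)
    (hn : n = 2 * r + 2) (hs1 : r - h + 1 ≤ s) (hs2 : s ≤ 2 * r - h)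
    (F : Type) [Field F] [Fintype F] [DecidableEq F] (hq : q = Fintype.card F)
    (C : Submodule F (LIdx k h 2 → F))
    (hsys : ∀ x : Fin k → F, ∃! c : LIdx k h 2 → F,
      c ∈ C ∧ ∀ j : Fin k, c (Sum.inl (Fin.castLE (Nat.le_add_right k h) j)) = x j)
    (a : Fin 2 → Fin r → F) (ha : ∀ i j, a i j ≠ 0)
    (hloc : ∀ c ∈ C, ∀ i : Fin 2,
      c (Sum.inr i) = ∑ j : Fin r, a i j * c (Sum.inl (lCoord k h r 2 hkh i j)))
    (hmrc : ∀ E : Finset (LIdx k h 2), E.card = k + h →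
      (∀ i : Fin 2, (E ∩ lGroup k h r 2 i).card = r) →
      Module.finrank F
          (C.map (LinearMap.funLeft F F (Subtype.val : ↥E → LIdx k h 2))) = k ∧
      ∀ y ∈ C.map (LinearMap.funLeft F F (Subtype.val : ↥E → LIdx k h 2)),
        y ≠ 0 → h + 1 ≤ hammingNorm y)
    (As : ℕ → ℕ)
    (hAs : ∀ w, As w = Nat.card {D : Submodule F (LIdx k h 2 → F) //
      D ≤ C ∧ Module.finrank F D = s ∧
        Set.ncard {j : LIdx k h 2 | ∃ c ∈ D, c j ≠ 0} = w}) :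
    (∀ w, h + 2 + s ≤ w → w ≤ n →
      (As w : ℚ) = (n.choose w : ℚ) *
        ∑ j ∈ Finset.range (w + 2 * r - n - h - s + 1),
          (w.choose j : ℚ) * (-1 : ℚ) ^ j * gbinom q (k + w - n - j) s) ∧
    (∀ w, w < h + 2 + s → As w = 0) :=
  stmt_18_general k h r n q s hkh hn hs1 F hq C hsys hmrc As hAs
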